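/- arXiv:1912.04701 — 6 statements merged into one kernel-verified Lean document; each statement's English description precedes it below -/
import Mathlib

section
/- A simple symmetric random walk on Z^2 (each of the 4 unit steps with probability 1/4) is recurrent: with probability 1 it returns to the origin. -/
/-!
Let `r n` be the probability that the walk is at the origin at time `n`, and `a n` the
probability that it avoids the origin at the times `1, …, n`. Splitting a path of length `N` at
its last visit to the origin gives `∑_{j ≤ N} r j * a (N - j) = 1`; as `a` is antitone,
`a N * ∑_{j ≤ N} r j ≤ 1`. Hence the walk returns almost surely as soon as `∑ r n = ∞`.
In the plane the rotation `(x, y) ↦ (x + y, x - y)` turns the simple walk into a pair of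
independent simple walks on `ℤ`, so `r (2m) = (C(2m, m) / 4^m)^2 ≥ 1 / (4m)`, and the harmonic
series diverges. All these probabilities are counts of words over the alphabet of steps, each
word of length `N` having probability `4^(-N)`.
-/

open MeasureTheory ProbabilityTheory

/-- A vector in `ℤ^k` is a unit coordinate step if it is `±e_j` for some coordinate `j`. -/
def IsUnitStep {k : ℕ} (v : Fin k → ℤ) : Prop :=
  ∃ j : Fin k, v = Pi.single j 1 ∨ v = -Pi.single j 1

open Finset Filter Topology
open scoped ENNReal

theorem Nat.sixteen_pow_le_four_mul_mul_centralBinom_sq {m : ℕ} (hm : m ≠ 0) :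
    16 ^ m ≤ 4 * m * m.centralBinom ^ 2 := by
  induction m, Nat.one_le_iff_ne_zero.2 hm using Nat.le_induction with
  | base => decide
  | succ m hm ih =>
    refine Nat.le_of_mul_le_mul_left ?_ m.succ_pos
    calc (m + 1) * 16 ^ (m + 1) = 16 * (m + 1) * 16 ^ m := by ring
      _ ≤ 16 * (m + 1) * (4 * m * m.centralBinom ^ 2) := by gcongr; exact ih (by omega)
      _ ≤ 16 * (2 * m + 1) ^ 2 * m.centralBinom ^ 2 := by
        have : (m + 1) * (4 * m) ≤ (2 * m + 1) ^ 2 := by nlinarith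
        nlinarith [Nat.zero_le (m.centralBinom ^ 2)]
      _ = (m + 1) * (4 * (m + 1) * (m + 1).centralBinom ^ 2) := by
        rw [show (m + 1) * (4 * (m + 1) * (m + 1).centralBinom ^ 2) =
          4 * ((m + 1) * (m + 1).centralBinom) ^ 2 by ring, Nat.succ_mul_centralBinom_succ]
        ring

namespace RandomWalk

section Words

variable {α G : Type*} [AddCommMonoid G]

def walk (step : α → G) {n : ℕ} (s : Fin n → α) (k : ℕ) : G :=
  ∑ i ∈ range k, if h : i < n then step (s ⟨i, h⟩) else 0

variable {step : α → G}

@[simp]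
lemma walk_zero {n : ℕ} (s : Fin n → α) : walk step s 0 = 0 := by
  simp [walk]

lemma walk_eq_sum {n : ℕ} (s : Fin n → α) : walk step s n = ∑ i, step (s i) := by
  rw [walk, ← Fin.sum_univ_eq_sum_range]
  simp

lemma sum_range_eq_walk {N n : ℕ} {s : Fin N → α} {f : ℕ → G}
    (hf : ∀ i : Fin N, f i = step (s i)) (hn : n ≤ N) :
    ∑ i ∈ range n, f i = walk step s n :=
  sum_congr rfl fun i hi => by
    rw [dif_pos ((mem_range.1 hi).trans_le hn), ← hf]

lemma walk_append_of_le {j m k : ℕ} (u : Fin j → α) (v : Fin m → α) (hk : k ≤ j) :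
    walk step (Fin.append u v) k = walk step u k :=
  sum_congr rfl fun i hi => by
    have hij : i < j := (mem_range.1 hi).trans_le hk
    rw [dif_pos hij, dif_pos (hij.trans_le (j.le_add_right m))]
    exact congrArg step (Fin.append_left u v ⟨i, hij⟩)

lemma walk_append_add {j m : ℕ} (u : Fin j → α) (v : Fin m → α) (k : ℕ) :
    walk step (Fin.append u v) (j + k) = walk step u j + walk step v k := by
  rw [walk, sum_range_add, ← walk, walk_append_of_le u v le_rfl, walk]
  congr 1
  refine sum_congr rfl fun i _ => ?_
  by_cases hi : i < m
  · rw [dif_pos (by omega), dif_pos hi]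
    exact congrArg step (Fin.append_right u v ⟨i, hi⟩)
  · rw [dif_neg (by omega), dif_neg hi]

lemma walk_comp {H : Type*} [AddCommMonoid H] (φ : G →+ H) {n : ℕ} (s : Fin n → α)
    (k : ℕ) :
    walk (φ ∘ step) s k = φ (walk step s k) := by
  simp only [walk, map_sum, apply_dite φ, map_zero, Function.comp_apply]

variable [Fintype α] [DecidableEq G] (step)

def returnWords (n : ℕ) : Finset (Fin n → α) := {s | walk step s n = 0}

def avoidingWords (n : ℕ) : Finset (Fin n → α) :=
  {s | ∀ k ∈ (Icc 1 n : Finset ℕ), walk step s k ≠ 0}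

variable {step}

@[simp]
lemma mem_returnWords {n : ℕ} {s : Fin n → α} :
    s ∈ returnWords step n ↔ walk step s n = 0 := by
  simp [returnWords]

@[simp]
lemma mem_avoidingWords {n : ℕ} {s : Fin n → α} :
    s ∈ avoidingWords step n ↔ ∀ k ∈ Icc 1 n, walk step s k ≠ 0 := by
  simp [avoidingWords]

lemma findGreatest_walk_append_eq_iff {j m : ℕ} (u : Fin j → α) (v : Fin m → α) :
    Nat.findGreatest (fun k => walk step (Fin.append u v) k = 0) (j + m) = j ↔
      u ∈ returnWords step j ∧ v ∈ avoidingWords step m := by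
  simp only [Nat.findGreatest_eq_iff, mem_returnWords, mem_avoidingWords,
    walk_append_of_le u v le_rfl, j.le_add_right m, true_and]
  constructor
  · rintro ⟨hzero, hafter⟩
    have hu : walk step u j = 0 := by
      rcases j.eq_zero_or_pos with rfl | hj
      · exact walk_zero u
      · exact hzero hj.ne'
    refine ⟨hu, fun k hk => ?_⟩
    obtain ⟨hk1, hkm⟩ := mem_Icc.1 hk
    have := hafter (n := j + k) (by omega) (by omega)
    rwa [walk_append_add, hu, zero_add] at this
  · rintro ⟨hu, hv⟩
    refine ⟨fun _ => hu, fun k hjk hkm => ?_⟩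
    obtain ⟨i, rfl⟩ := Nat.exists_eq_add_of_lt hjk
    rw [add_assoc, walk_append_add, hu, zero_add]
    exact hv _ (mem_Icc.2 ⟨by omega, by omega⟩)

lemma card_filter_findGreatest_walk_eq (j m : ℕ) :
    #{s : Fin (j + m) → α | Nat.findGreatest (fun k => walk step s k = 0) (j + m) = j} =
      #(returnWords step j) * #(avoidingWords step m) := by
  rw [← card_product]
  refine (card_equiv (Fin.appendEquiv j m) fun p => ?_).symm
  simp only [mem_product, mem_filter, mem_univ, true_and]
  exact (findGreatest_walk_append_eq_iff p.1 p.2).symm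

theorem card_pow_eq_sum_card_returnWords_mul_card_avoidingWords (N : ℕ) :
    Fintype.card α ^ N =
      ∑ j ∈ range (N + 1), #(returnWords step j) * #(avoidingWords step (N - j)) := by
  calc Fintype.card α ^ N = #(univ : Finset (Fin N → α)) := by simp
    _ = ∑ j ∈ range (N + 1),
          #{s : Fin N → α | Nat.findGreatest (fun k => walk step s k = 0) N = j} :=
        card_eq_sum_card_fiberwise fun s _ =>
          mem_range.2 (Nat.lt_succ_of_le (Nat.findGreatest_le N))
    _ = _ := sum_congr rfl fun j hj => by
        obtain ⟨m, rfl⟩ := Nat.exists_eq_add_of_le (Nat.lt_succ_iff.1 (mem_range.1 hj))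
        rw [Nat.add_sub_cancel_left, card_filter_findGreatest_walk_eq]

lemma card_avoidingWords_add_le (j m : ℕ) :
    #(avoidingWords step (j + m)) ≤ #(avoidingWords step j) * Fintype.card α ^ m := by
  calc #(avoidingWords step (j + m))
      ≤ #((avoidingWords step j ×ˢ univ).map (Fin.appendEquiv j m).toEmbedding) := by
        refine card_le_card fun s hs => ?_
        obtain ⟨⟨u, v⟩, rfl⟩ := (Fin.appendEquiv j m).surjective s
        refine mem_map_of_mem _ (mem_product.2 ⟨?_, mem_univ v⟩)
        rw [mem_avoidingWords] at hs ⊢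
        intro k hk
        rw [← walk_append_of_le u v (mem_Icc.1 hk).2]
        exact hs k (mem_Icc.2 ⟨(mem_Icc.1 hk).1, (mem_Icc.1 hk).2.trans (j.le_add_right m)⟩)
    _ = #(avoidingWords step j) * Fintype.card α ^ m := by simp

variable (step)

noncomputable def returnProb (n : ℕ) : ℝ := #(returnWords step n) / Fintype.card α ^ n

noncomputable def avoidProb (n : ℕ) : ℝ := #(avoidingWords step n) / Fintype.card α ^ n

variable {step}

lemma returnProb_nonneg (n : ℕ) : 0 ≤ returnProb step n := by
  unfold returnProb; positivity

@[simp]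
lemma returnProb_zero : returnProb step 0 = 1 := by
  simp [returnProb, returnWords]

lemma returnWords_comp {H : Type*} [AddCommMonoid H] [DecidableEq H] {φ : G →+ H}
    (hφ : Function.Injective φ) (n : ℕ) : returnWords (φ ∘ step) n = returnWords step n := by
  ext s
  simp [walk_comp, map_eq_zero_iff φ hφ]

lemma card_returnWords_prodMap {β H : Type*} [Fintype β] [AddCommMonoid H] [DecidableEq H]
    (f : α → G) (g : β → H) (n : ℕ) :
    #(returnWords (Prod.map f g) n) = #(returnWords f n) * #(returnWords g n) := by
  rw [← card_product]
  refine card_equiv (Equiv.arrowProdEquivProdArrow _ _ _) fun s => ?_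
  have hwalk : walk (Prod.map f g) s n =
      (walk f (fun i => (s i).1) n, walk g (fun i => (s i).2) n) :=
    Prod.ext (walk_comp (AddMonoidHom.fst G H) s n).symm
      (walk_comp (AddMonoidHom.snd G H) s n).symm
  simp [hwalk, Prod.ext_iff]

variable [Nonempty α]

lemma sum_returnProb_mul_avoidProb (N : ℕ) :
    ∑ j ∈ range (N + 1), returnProb step j * avoidProb step (N - j) = 1 := by
  calc ∑ j ∈ range (N + 1), returnProb step j * avoidProb step (N - j)
      = (∑ j ∈ range (N + 1), (#(returnWords step j) * #(avoidingWords step (N - j)) : ℝ)) /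
          Fintype.card α ^ N := by
        rw [sum_div]
        refine sum_congr rfl fun j hj => ?_
        rw [returnProb, avoidProb, div_mul_div_comm, ← pow_add,
          Nat.add_sub_cancel' (Nat.lt_succ_iff.1 (mem_range.1 hj))]
    _ = 1 := by
        rw [div_eq_one_iff_eq (by positivity)]
        exact_mod_cast (card_pow_eq_sum_card_returnWords_mul_card_avoidingWords N).symm

lemma avoidProb_antitone : Antitone (avoidProb step) := by
  intro a b hab
  obtain ⟨m, rfl⟩ := Nat.exists_eq_add_of_le hab
  calc avoidProb step (a + m)
      ≤ #(avoidingWords step a) * Fintype.card α ^ m / Fintype.card α ^ (a + m) := by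
        unfold avoidProb
        gcongr
        exact_mod_cast card_avoidingWords_add_le a m
    _ = avoidProb step a := by
        rw [avoidProb, pow_add]
        field_simp

lemma avoidProb_mul_sum_returnProb_le_one (N : ℕ) :
    avoidProb step N * ∑ j ∈ range (N + 1), returnProb step j ≤ 1 :=
  calc avoidProb step N * ∑ j ∈ range (N + 1), returnProb step j
      = ∑ j ∈ range (N + 1), returnProb step j * avoidProb step N := by
        rw [mul_comm, sum_mul]
    _ ≤ ∑ j ∈ range (N + 1), returnProb step j * avoidProb step (N - j) :=
        sum_le_sum fun j _ =>
          mul_le_mul_of_nonneg_left (avoidProb_antitone (N.sub_le j)) (returnProb_nonneg j)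
    _ = 1 := sum_returnProb_mul_avoidProb N

theorem tendsto_avoidProb_of_not_summable (h : ¬ Summable (returnProb step)) :
    Tendsto (avoidProb step) atTop (𝓝 0) := by
  have hsum : Tendsto (fun N => ∑ j ∈ range (N + 1), returnProb step j) atTop atTop :=
    ((not_summable_iff_tendsto_nat_atTop_of_nonneg returnProb_nonneg).1 h).comp
      (tendsto_add_atTop_nat 1)
  refine squeeze_zero (fun N => ?_) (fun N => ?_) hsum.inv_tendsto_atTop
  · unfold avoidProb; positivity
  · have hpos : 0 < ∑ j ∈ range (N + 1), returnProb step j :=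
      lt_of_lt_of_le one_pos (by
        simpa using single_le_sum (fun j _ => returnProb_nonneg (step := step) j)
          (mem_range.2 N.succ_pos))
    show avoidProb step N ≤ (∑ j ∈ range (N + 1), returnProb step j)⁻¹
    rw [inv_eq_one_div, le_div_iff₀ hpos]
    exact avoidProb_mul_sum_returnProb_le_one N

end Words

section Plane

def boolSign (b : Bool) : ℤ := if b then 1 else -1

lemma walk_boolSign {n : ℕ} (σ : Fin n → Bool) :
    walk boolSign σ n = 2 * #{i | σ i = true} - n := by
  have hsign : ∀ b, boolSign b = 2 * (if b = true then 1 else 0) - 1 := by decide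
  rw [walk_eq_sum, sum_congr rfl fun i _ => hsign (σ i), sum_sub_distrib, ← mul_sum, sum_boole]
  simp

lemma card_returnWords_boolSign (m : ℕ) :
    #(returnWords boolSign (2 * m)) = (2 * m).choose m := by
  have hret : returnWords boolSign (2 * m) =
      ({σ | #{i | σ i = true} = m} : Finset (Fin (2 * m) → Bool)) := by
    ext σ
    simp only [mem_returnWords, mem_filter, mem_univ, true_and, walk_boolSign]
    omega
  have hchoose : (2 * m).choose m = #(powersetCard m (univ : Finset (Fin (2 * m)))) := by simp
  rw [hret, hchoose]
  refine card_nbij' (fun σ : Fin (2 * m) → Bool => ({i | σ i = true} : Finset _))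
    (fun T i => decide (i ∈ T)) ?_ ?_ ?_ ?_ <;> intro x hx
  · simpa using hx
  · simpa using hx
  · funext i; simp
  · ext i; simp

def diagStep : Bool × Bool → Fin 2 → ℤ
  | (true, true) => Pi.single 0 1
  | (false, false) => -Pi.single 0 1
  | (true, false) => Pi.single 1 1
  | (false, true) => -Pi.single 1 1

def diagRotation : (Fin 2 → ℤ) →+ ℤ × ℤ where
  toFun w := (w 0 + w 1, w 0 - w 1)
  map_zero' := rfl
  map_add' v w := by ext <;> simp <;> ring

lemma diagRotation_injective : Function.Injective diagRotation := by
  refine (injective_iff_map_eq_zero diagRotation).2 fun w hw => ?_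
  simp only [diagRotation, AddMonoidHom.coe_mk, ZeroHom.coe_mk, Prod.mk_eq_zero] at hw
  funext i
  fin_cases i <;> simp <;> omega

lemma diagRotation_comp_diagStep : diagRotation ∘ diagStep = Prod.map boolSign boolSign := by
  funext ⟨a, b⟩
  cases a <;> cases b <;> rfl

lemma card_returnWords_diagStep (m : ℕ) :
    #(returnWords diagStep (2 * m)) = m.centralBinom ^ 2 := by
  rw [← returnWords_comp diagRotation_injective, diagRotation_comp_diagStep,
    card_returnWords_prodMap, card_returnWords_boolSign, Nat.centralBinom_eq_two_mul_choose, sq]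

lemma inv_four_mul_le_returnProb_diagStep (m : ℕ) :
    (4 * m : ℝ)⁻¹ ≤ returnProb diagStep (2 * m) := by
  rcases eq_or_ne m 0 with rfl | hm
  · simp
  rw [returnProb, card_returnWords_diagStep, Fintype.card_prod, Fintype.card_bool, pow_mul,
    inv_eq_one_div, div_le_div_iff₀ (by positivity) (by positivity), one_mul]
  exact_mod_cast (Nat.sixteen_pow_le_four_mul_mul_centralBinom_sq hm).trans_eq (by ring)

lemma not_summable_returnProb_diagStep : ¬ Summable (returnProb diagStep) := fun h => by
  have hinv : Summable fun m : ℕ => (4 * m : ℝ)⁻¹ :=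
    (h.comp_injective (mul_right_injective₀ two_ne_zero)).of_nonneg_of_le
      (fun m => by positivity) inv_four_mul_le_returnProb_diagStep
  exact Real.not_summable_natCast_inv ((summable_mul_left_iff (inv_ne_zero four_ne_zero)).1
    (hinv.congr fun m => mul_inv 4 (m : ℝ)))

lemma isUnitStep_diagStep (p : Bool × Bool) : IsUnitStep (diagStep p) := by
  rcases p with ⟨_ | _, _ | _⟩
  exacts [⟨0, Or.inr rfl⟩, ⟨1, Or.inr rfl⟩, ⟨1, Or.inl rfl⟩, ⟨0, Or.inl rfl⟩]

lemma diagStep_injective : Function.Injective diagStep := by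
  decide

end Plane

section Probability

variable {Ω α G : Type*} [MeasurableSpace Ω] {μ : Measure Ω} [Fintype α]
  [MeasurableSpace G] [MeasurableSingletonClass G] {step : α → G} {X : ℕ → Ω → G}

lemma measure_forall_eq_step (hindep : iIndepFun X μ)
    (hX : ∀ i a, μ (X i ⁻¹' {step a}) = (Fintype.card α : ℝ≥0∞)⁻¹) {N : ℕ}
    (s : Fin N → α) :
    μ {ω | ∀ i : Fin N, X i ω = step (s i)} = (Fintype.card α : ℝ≥0∞)⁻¹ ^ N := by
  have h := (hindep.precomp Fin.val_injective).measure_inter_preimage_eq_mul univ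
    (sets := fun i => {step (s i)}) fun i _ => measurableSet_singleton _
  convert h using 1
  · congr 1
    ext ω
    simp
  · simp [hX]

variable [IsProbabilityMeasure μ] [Nonempty α]

lemma ae_mem_range_step (hmeas : ∀ i, Measurable (X i)) (hstep : Function.Injective step)
    (hX : ∀ i a, μ (X i ⁻¹' {step a}) = (Fintype.card α : ℝ≥0∞)⁻¹) :
    ∀ᵐ ω ∂μ, ∀ i, X i ω ∈ Set.range step := by
  refine ae_all_iff.2 fun i => ?_
  rw [ae_iff_measure_eq ((hmeas i) (Set.finite_range step).measurableSet).nullMeasurableSet,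
    measure_univ]
  calc μ (X i ⁻¹' Set.range step) = μ (⋃ a, X i ⁻¹' {step a}) := by
        rw [Set.range_eq_iUnion, Set.preimage_iUnion]
    _ = ∑ a : α, μ (X i ⁻¹' {step a}) := by
        rw [measure_iUnion (fun a b hab => ?_) fun a => hmeas i (measurableSet_singleton _),
          tsum_fintype]
        exact (Set.disjoint_singleton.2 (hstep.ne hab)).preimage (X i)
    _ = 1 := by
        simp [hX, ENNReal.mul_inv_cancel]

lemma measure_forall_sum_range_ne_zero_le [AddCommMonoid G] [DecidableEq G]
    (hmeas : ∀ i, Measurable (X i)) (hindep : iIndepFun X μ) (hstep : Function.Injective step)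
    (hX : ∀ i a, μ (X i ⁻¹' {step a}) = (Fintype.card α : ℝ≥0∞)⁻¹) (N : ℕ) :
    μ {ω | ∀ n ∈ Icc 1 N, ∑ i ∈ range n, X i ω ≠ 0} ≤
      ENNReal.ofReal (avoidProb step N) := by
  calc μ {ω | ∀ n ∈ Icc 1 N, ∑ i ∈ range n, X i ω ≠ 0}
      ≤ μ (⋃ s ∈ avoidingWords step N, {ω | ∀ i : Fin N, X i ω = step (s i)}) := by
        refine measure_mono_ae ?_
        filter_upwards [ae_mem_range_step hmeas hstep hX] with ω hω hA
        choose s hs using fun i : Fin N => hω i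
        refine Set.mem_biUnion (x := s) (mem_coe.2 (mem_avoidingWords.2 fun k hk => ?_))
          (show ∀ i : Fin N, X i ω = step (s i) from fun i => (hs i).symm)
        rw [← sum_range_eq_walk (f := fun i => X i ω) (fun i => (hs i).symm) (mem_Icc.1 hk).2]
        exact hA k hk
    _ ≤ ∑ s ∈ avoidingWords step N, μ {ω | ∀ i : Fin N, X i ω = step (s i)} :=
        measure_biUnion_finset_le _ _
    _ = ENNReal.ofReal (avoidProb step N) := by
        rw [avoidProb, ENNReal.ofReal_div_of_pos (by positivity)]
        simp [measure_forall_eq_step hindep hX, div_eq_mul_inv, ENNReal.inv_pow]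

theorem ae_exists_sum_range_eq_zero_of_not_summable [AddCommMonoid G] [DecidableEq G]
    (hmeas : ∀ i, Measurable (X i)) (hindep : iIndepFun X μ) (hstep : Function.Injective step)
    (hX : ∀ i a, μ (X i ⁻¹' {step a}) = (Fintype.card α : ℝ≥0∞)⁻¹)
    (hrec : ¬ Summable (returnProb step)) :
    ∀ᵐ ω ∂μ, ∃ n > 0, ∑ i ∈ range n, X i ω = 0 := by
  have hlim : Tendsto (fun N => ENNReal.ofReal (avoidProb step N)) atTop (𝓝 0) := by
    simpa using ENNReal.tendsto_ofReal (tendsto_avoidProb_of_not_summable hrec)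
  refine ae_iff.2 (le_zero_iff.1 (ge_of_tendsto' hlim fun N => ?_))
  refine (measure_mono fun ω hω n hn => ?_).trans
    (measure_forall_sum_range_ne_zero_le hmeas hindep hstep hX N)
  exact fun h => hω ⟨n, (mem_Icc.1 hn).1, h⟩

end Probability

end RandomWalk

/-- the simple symmetric random walk on ℤ² is recurrent. -/
theorem simple_walk_Z2_recurrent
    {Ω : Type*} [MeasurableSpace Ω] (μ : Measure Ω) [IsProbabilityMeasure μ]
    (X : ℕ → Ω → (Fin 2 → ℤ))
    (hmeas : ∀ i, Measurable (X i))
    (hindep : iIndepFun X μ)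
    (hstep : ∀ i v, IsUnitStep v → μ {ω | X i ω = v} = 1 / 4)
    (Y : ℕ → Ω → (Fin 2 → ℤ))
    (hY : ∀ n ω, Y n ω = ∑ i ∈ Finset.range n, X i ω) :
    μ {ω | ∃ n > 0, Y n ω = 0} = 1 := by
  have hX : ∀ i p, μ (X i ⁻¹' {RandomWalk.diagStep p}) =
      (Fintype.card (Bool × Bool) : ℝ≥0∞)⁻¹ :=
    fun i p => (hstep i _ (RandomWalk.isUnitStep_diagStep p)).trans (by norm_num)
  have hret := RandomWalk.ae_exists_sum_range_eq_zero_of_not_summable hmeas hindep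
    RandomWalk.diagStep_injective hX RandomWalk.not_summable_returnProb_diagStep
  simp_rw [hY]
  exact (measure_congr (eventuallyEq_univ.2 hret)).trans measure_univ
end

section
/- For a random walk Y_n on Z^k with i.i.d. steps, recurrence (P(∃ n > 0, Y_n = 0) = 1) is equivalent to divergence of the series ∑_{n=1}^∞ P(Y_n = 0). -/
/-!
Write `r n = P(Y_n = 0)` and `q j = P(Y_m ≠ 0 for 0 < m ≤ j)`. Splitting the sample space
according to the last visit to `0` up to time `N`, and using that the walk started afresh at a
deterministic time `n` is independent of `Y_n` and has the law of the original walk, gives the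
renewal identity `∑_{n ≤ N} r n * q (N - n) = 1`. The `q j` decrease to the escape probability
`q∞`, and the identity forces `q∞ * ∑ r ≤ 1` as well as `q∞ * ∑ r ≥ 1` when `∑ r < ∞`:
so `q∞ = 0` exactly when `∑ r = ∞`.
-/

open MeasureTheory ProbabilityTheory Finset Filter Topology

section Renewal

variable {r q : ℕ → ENNReal}

lemma iInf_mul_tsum_le_one_of_renewal
    (h : ∀ N, ∑ n ∈ range (N + 1), r n * q (N - n) = 1) :
    (⨅ j, q j) * ∑' n, r n ≤ 1 := by
  rw [ENNReal.tsum_eq_iSup_nat' (tendsto_add_atTop_nat 1), ENNReal.mul_iSup]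
  refine iSup_le fun N => ?_
  calc (⨅ j, q j) * ∑ n ∈ range (N + 1), r n
      = ∑ n ∈ range (N + 1), (⨅ j, q j) * r n := mul_sum _ _ _
    _ ≤ ∑ n ∈ range (N + 1), r n * q (N - n) :=
        sum_le_sum fun n _ => by rw [mul_comm]; exact mul_le_mul_right (iInf_le _ _) _
    _ = 1 := h N

lemma one_le_tsum_mul_of_renewal (hq : Antitone q) (hq_le : ∀ j, q j ≤ 1)
    (h : ∀ N, ∑ n ∈ range (N + 1), r n * q (N - n) = 1) (hr : ∑' n, r n ≠ ⊤) (M : ℕ) :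
    1 ≤ (∑' n, r n) * q M := by
  have hbound_tail (K : ℕ) : 1 ≤ (∑' n, r n) * q M + ∑' n, r (n + (K + 1)) := by
    have hsum := h (M + K)
    rw [show M + K + 1 = (K + 1) + M by omega, sum_range_add] at hsum
    rw [← hsum]
    gcongr
    · calc ∑ n ∈ range (K + 1), r n * q (M + K - n)
          ≤ ∑ n ∈ range (K + 1), r n * q M :=
            sum_le_sum fun n hn => by
              gcongr; exact hq (by have := mem_range.1 hn; omega)
        _ = (∑ n ∈ range (K + 1), r n) * q M := (sum_mul _ _ _).symm
        _ ≤ (∑' n, r n) * q M := by gcongr; exact ENNReal.sum_le_tsum _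
    · calc ∑ n ∈ range M, r (K + 1 + n) * q (M + K - (K + 1 + n))
          ≤ ∑ n ∈ range M, r (n + (K + 1)) :=
            sum_le_sum fun n _ => by
              rw [add_comm n]; exact mul_le_of_le_one_right' (hq_le _)
        _ ≤ ∑' n, r (n + (K + 1)) := ENNReal.sum_le_tsum _
  have tail : Tendsto (fun K => ∑' n, r (n + (K + 1))) atTop (𝓝 0) :=
    (ENNReal.tendsto_sum_nat_add r hr).comp (tendsto_add_atTop_nat 1)
  simpa using ge_of_tendsto' (tendsto_const_nhds.add tail) hbound_tail

theorem iInf_eq_zero_iff_tsum_eq_top_of_renewal (hq : Antitone q) (hq_le : ∀ j, q j ≤ 1)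
    (h : ∀ N, ∑ n ∈ range (N + 1), r n * q (N - n) = 1) :
    ⨅ j, q j = 0 ↔ ∑' n, r n = ⊤ := by
  constructor
  · intro hq0
    by_contra hr
    have hbound := one_le_tsum_mul_of_renewal hq hq_le h hr
    have hr0 : ∑' n, r n ≠ 0 := fun h0 => by simpa [h0] using hbound 0
    have hinf := le_iInf hbound
    rw [← ENNReal.mul_iInf_of_ne hr0 hr, hq0] at hinf
    simp at hinf
  · intro hr
    by_contra hq0
    have hle := iInf_mul_tsum_le_one_of_renewal h
    rw [hr, ENNReal.mul_top hq0] at hle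
    simp at hle

end Renewal

section RandomWalk

variable {Ω G : Type*} [AddCommMonoid G]

def noReturnUpTo (j : ℕ) : Set (ℕ → G) :=
  {x | ∀ m ∈ Ioc 0 j, ∑ i ∈ range m, x i ≠ 0}

lemma noReturnUpTo_antitone : Antitone (noReturnUpTo (G := G)) :=
  fun _ _ hjk _ hx m hm => hx m (Ioc_subset_Ioc_right hjk hm)

lemma iInter_noReturnUpTo :
    ⋂ j, noReturnUpTo j = {x : ℕ → G | ∃ n > 0, ∑ i ∈ range n, x i = 0}ᶜ := by
  ext x
  simp only [noReturnUpTo, Set.mem_iInter, Set.mem_ofPred_eq, mem_Ioc, Set.mem_compl_iff,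
    not_exists, not_and]
  exact ⟨fun h n hn => h n n ⟨hn, le_rfl⟩, fun h _ m hm => h m hm.1⟩

def lastZero [DecidableEq G] (x : ℕ → G) (N : ℕ) : ℕ :=
  Nat.findGreatest (fun m => ∑ i ∈ range m, x i = 0) N

lemma lastZero_le [DecidableEq G] (x : ℕ → G) (N : ℕ) : lastZero x N ≤ N := Nat.findGreatest_le N

lemma lastZero_eq_iff [DecidableEq G] {x : ℕ → G} {n N : ℕ} (hn : n ≤ N) :
    lastZero x N = n ↔ ∑ i ∈ range n, x i = 0 ∧ (fun i => x (n + i)) ∈ noReturnUpTo (N - n) := by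
  rw [lastZero, Nat.findGreatest_eq_iff]
  constructor
  · rintro ⟨-, hzero, hlast⟩
    have hn0 : ∑ i ∈ range n, x i = 0 := by
      rcases eq_or_ne n 0 with rfl | h
      · exact sum_range_zero _
      · exact hzero h
    refine ⟨hn0, fun m hm hm0 => ?_⟩
    rw [mem_Ioc] at hm
    exact hlast (n := n + m) (by omega) (by omega) (by rwa [sum_range_add, hn0, zero_add])
  · rintro ⟨hn0, hno⟩
    refine ⟨hn, fun _ => hn0, fun m hnm hmN hm0 => ?_⟩
    obtain ⟨d, rfl⟩ := Nat.exists_eq_add_of_le hnm.le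
    rw [sum_range_add, hn0, zero_add] at hm0
    exact hno d (mem_Ioc.2 ⟨by omega, by omega⟩) hm0

variable [MeasurableSpace Ω] [MeasurableSpace G] [MeasurableSingletonClass G] [MeasurableAdd₂ G]

lemma measurableSet_noReturnUpTo (j : ℕ) : MeasurableSet (noReturnUpTo (G := G) j) := by
  simp only [noReturnUpTo, Set.ofPred_forall]
  exact .biInter (Set.to_countable _) fun m _ =>
    ((Finset.measurable_sum _ fun i _ => measurable_pi_apply i) (measurableSet_singleton 0)).compl

variable {μ : Measure Ω} {X : ℕ → Ω → G}

lemma measure_sum_range_eq_zero_inter_noReturnUpTo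
    (hmeas : ∀ i, Measurable (X i)) (hindep : iIndepFun X μ)
    (hident : ∀ i j, IdentDistrib (X i) (X j) μ μ) (n j : ℕ) :
    μ ({ω | ∑ i ∈ range n, X i ω = 0} ∩ (fun ω i => X (n + i) ω) ⁻¹' noReturnUpTo j)
      = μ {ω | ∑ i ∈ range n, X i ω = 0} * μ ((fun ω i => X i ω) ⁻¹' noReturnUpTo j) := by
  have hshift : IdentDistrib (fun ω i => X (n + i) ω) (fun ω i => X i ω) μ μ :=
    IdentDistrib.pi (fun i => hident (n + i) i) (hindep.precomp (add_right_injective n)) hindep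
  rw [← hshift.measure_mem_eq (measurableSet_noReturnUpTo j)]
  let σ (s : Set ℕ) : MeasurableSpace Ω := ⨆ i ∈ s, MeasurableSpace.comap (X i) ‹_›
  have hσ (s : Set ℕ) (i : ℕ) (hi : i ∈ s) : Measurable[σ s] (X i) :=
    .of_comap_le (le_iSup₂ (f := fun i (_ : i ∈ s) => MeasurableSpace.comap (X i) _) i hi)
  refine (Indep_iff (σ (Set.Iio n)) (σ (Set.Ici n)) μ).1
    (indep_iSup_of_disjoint (fun i => (hmeas i).comap_le) hindep.iIndep
      (Set.Iio_disjoint_Ici le_rfl)) _ _ ?_ ?_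
  · exact (Finset.measurable_sum _ fun i hi => hσ _ i (by simpa using hi))
      (measurableSet_singleton 0)
  · exact (@measurable_pi_lambda _ _ _ (σ (Set.Ici n)) _ _ fun i => hσ _ (n + i) (by simp))
      (measurableSet_noReturnUpTo j)

lemma sum_measure_mul_measure_noReturnUpTo_eq_one
    (hmeas : ∀ i, Measurable (X i)) (hindep : iIndepFun X μ)
    (hident : ∀ i j, IdentDistrib (X i) (X j) μ μ) (N : ℕ) :
    ∑ n ∈ range (N + 1), μ {ω | ∑ i ∈ range n, X i ω = 0}
      * μ ((fun ω i => X i ω) ⁻¹' noReturnUpTo (N - n)) = 1 := by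
  classical
  have := hindep.isProbabilityMeasure
  have hfiber (n : ℕ) (hn : n ∈ range (N + 1)) :
      (fun ω => lastZero (X · ω) N) ⁻¹' {n}
        = {ω | ∑ i ∈ range n, X i ω = 0} ∩ (fun ω i => X (n + i) ω) ⁻¹' noReturnUpTo (N - n) := by
    ext ω
    exact lastZero_eq_iff (Nat.lt_succ_iff.1 (mem_range.1 hn))
  have hcover : (fun ω => lastZero (X · ω) N) ⁻¹' ↑(range (N + 1)) = Set.univ :=
    Set.eq_univ_of_forall fun ω => mem_range.2 (Nat.lt_succ_of_le (lastZero_le _ N))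
  rw [← measure_univ (μ := μ), ← hcover, ← sum_measure_preimage_singleton]
  · refine sum_congr rfl fun n hn => ?_
    rw [hfiber n hn, measure_sum_range_eq_zero_inter_noReturnUpTo hmeas hindep hident]
  · intro n hn
    rw [hfiber n hn]
    exact ((Finset.measurable_sum _ fun i _ => hmeas i) (measurableSet_singleton 0)).inter
      ((measurable_pi_lambda _ fun i => hmeas (n + i)) (measurableSet_noReturnUpTo _))

end RandomWalk

/-- for a random walk on ℤ^k with i.i.d. steps, recurrence is equivalent to
divergence of the series `∑_{n ≥ 1} P(Y_n = 0)`. -/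
theorem recurrence_iff_sum_return_probs_diverges
    {k : ℕ}
    {Ω : Type*} [MeasurableSpace Ω] (μ : Measure Ω) [IsProbabilityMeasure μ]
    (X : ℕ → Ω → (Fin k → ℤ))
    (hmeas : ∀ i, Measurable (X i))
    (hindep : iIndepFun X μ)
    (hident : ∀ i j, IdentDistrib (X i) (X j) μ μ)
    (Y : ℕ → Ω → (Fin k → ℤ))
    (hY : ∀ n ω, Y n ω = ∑ i ∈ Finset.range n, X i ω) :
    μ {ω | ∃ n > 0, Y n ω = 0} = 1 ↔
      ∑' n : ℕ, μ {ω | Y (n + 1) ω = 0} = ⊤ := by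
  obtain rfl : Y = fun n ω => ∑ i ∈ range n, X i ω := funext₂ hY
  have hpath : Measurable fun ω i => X i ω := measurable_pi_lambda _ hmeas
  have hrec : {ω | ∃ n > 0, ∑ i ∈ range n, X i ω = 0}
      = (⋂ j, (fun ω i => X i ω) ⁻¹' noReturnUpTo j)ᶜ := by
    rw [← Set.preimage_iInter, iInter_noReturnUpTo, Set.preimage_compl, compl_compl]
    rfl
  have hanti : Antitone fun j => (fun ω i => X i ω) ⁻¹' noReturnUpTo j :=
    fun _ _ hjk => Set.preimage_mono (noReturnUpTo_antitone hjk)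
  rw [hrec, prob_compl_eq_one_iff (.iInter fun j => hpath (measurableSet_noReturnUpTo j)),
    hanti.measure_iInter (fun j => (hpath (measurableSet_noReturnUpTo j)).nullMeasurableSet)
      ⟨0, measure_ne_top μ _⟩,
    iInf_eq_zero_iff_tsum_eq_top_of_renewal (fun _ _ hjk => measure_mono (hanti hjk))
      (fun _ => prob_le_one) (sum_measure_mul_measure_noReturnUpTo_eq_one hmeas hindep hident),
    tsum_eq_zero_add' ENNReal.summable, ENNReal.add_eq_top]
  simp
end

section
/- For the simple symmetric random walk on Z^3, for every x ∈ Z^3 and every n, P(Y_n = x) ≤ 6^3 · (P(Y_n = 0) + P(Y_{n+1} = 0) + P(Y_{n+2} = 0) + P(Y_{n+3} = 0)). -/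
/-!
Write `N_n(x)` for the number of nearest-neighbour paths of length `n` from `0` to `x` in `ℤ^d`,
so that `P(Y_n = x) = N_n(x) / (2d)^n`. Conditioning on the last step and inducting on `n`,
`N_n(x)` does not decrease when one coordinate of `x` is moved towards `0` by an even amount, so
`N_n(x) ≤ N_n(y)` with `y = x mod 2 ∈ {0,1}^d`. Prolonging a path by one step `-e_i` for each
coordinate `y_i = 1` gives `N_n(y) ≤ N_{n+k}(0)` with `k ≤ d`, that is
`P(Y_n = x) ≤ (2d)^k P(Y_{n+k} = 0)`.
-/

open MeasureTheory ProbabilityTheory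
open scoped ENNReal

namespace SimpleRandomWalk

open Function

variable {d : ℕ}

def unitStep (p : Fin d × Bool) : Fin d → ℤ := Pi.single p.1 (if p.2 then 1 else -1)

lemma isUnitStep_unitStep (p : Fin d × Bool) : IsUnitStep (unitStep p) := by
  obtain ⟨j, _ | _⟩ := p <;> exact ⟨j, by simp [unitStep, Pi.single_neg]⟩

lemma unitStep_injective : Injective (unitStep (d := d)) := by
  rintro ⟨i, b⟩ ⟨j, c⟩ h
  have hi := congrFun h i
  have hj := congrFun h j
  by_cases hij : i = j
  · subst hij
    cases b <;> cases c <;> simp_all [unitStep]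
  · cases b <;> cases c <;> simp_all [unitStep]

def walkCount : ℕ → (Fin d → ℤ) → ℕ
  | 0, x => if x = 0 then 1 else 0
  | n + 1, x => ∑ p, walkCount n (x - unitStep p)

lemma walkCount_le_walkCount_succ_add_unitStep (n : ℕ) (x : Fin d → ℤ) (p : Fin d × Bool) :
    walkCount n x ≤ walkCount (n + 1) (x + unitStep p) := by
  simpa [walkCount] using
    Finset.single_le_sum (f := fun q => walkCount n (x + unitStep p - unitStep q))
      (fun _ _ => Nat.zero_le _) (Finset.mem_univ p)

lemma apply_sub_one_add_apply_add_one_le {f : ℤ → ℕ}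
    (hf : ∀ s t, |t| ≤ |s| → 2 ∣ s - t → f s ≤ f t) {s t : ℤ} (hts : |t| ≤ |s|)
    (hst : 2 ∣ s - t) : f (s - 1) + f (s + 1) ≤ f (t - 1) + f (t + 1) := by
  rcases eq_or_ne |t| |s| with h | h
  · rcases abs_eq_abs.mp h with rfl | rfl
    · rfl
    · have h1 := hf (s - 1) (-s + 1) (by simp only [abs_eq_max_neg]; omega) (by omega)
      have h2 := hf (s + 1) (-s - 1) (by simp only [abs_eq_max_neg]; omega) (by omega)
      omega
  · have h1 := hf (s - 1) (t - 1) (by simp only [abs_eq_max_neg] at *; omega) (by omega)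
    have h2 := hf (s + 1) (t + 1) (by simp only [abs_eq_max_neg] at *; omega) (by omega)
    omega

lemma sub_unitStep_eq_update (x : Fin d → ℤ) (a : Fin d) (b : Bool) :
    x - unitStep (a, b) = update x a (x a - if b then 1 else -1) := by
  ext i
  rcases eq_or_ne i a with rfl | h
  · simp [unitStep]
  · simp [unitStep, h]

lemma walkCount_le_walkCount_update : ∀ (n : ℕ) (x : Fin d → ℤ) (j : Fin d) (t : ℤ),
    |t| ≤ |x j| → 2 ∣ x j - t → walkCount n x ≤ walkCount n (update x j t)
  | 0, x, j, t, hle, hdvd => by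
    rcases eq_or_ne x 0 with rfl | hx
    · obtain rfl : t = 0 := by simpa using hle
      simp
    · simp [walkCount, hx]
  | n + 1, x, j, t, hle, hdvd => by
    simp only [walkCount, Fintype.sum_prod_type, Fintype.sum_bool]
    refine Finset.sum_le_sum fun a _ => ?_
    rcases eq_or_ne a j with rfl | haj
    · -- the steps `±e_j` lead to `x j ∓ 1`, to be compared with `t ∓ 1` as a pair
      simp only [sub_unitStep_eq_update, update_self, update_idem, if_true]
      exact apply_sub_one_add_apply_add_one_le (f := fun s => walkCount n (update x a s))
        (fun s t' hle' hdvd' => by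
          simpa using walkCount_le_walkCount_update n (update x a s) a t' (by simpa) (by simpa))
        hle hdvd
    · -- steps along another axis commute with the update of coordinate `j`
      simp only [sub_unitStep_eq_update, update_of_ne haj, update_comm haj.symm]
      refine add_le_add ?_ ?_ <;>
        exact walkCount_le_walkCount_update n _ j t (by simpa [update_of_ne haj.symm])
          (by simpa [update_of_ne haj.symm])

lemma walkCount_le_walkCount_update_emod_two (n : ℕ) (x : Fin d → ℤ) (j : Fin d) :
    walkCount n x ≤ walkCount n (update x j (x j % 2)) :=
  walkCount_le_walkCount_update n x j _ (by simp only [abs_eq_max_neg]; omega) (by omega)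

lemma walkCount_le_walkCount_emod_two (n : ℕ) (x : Fin d → ℤ) :
    walkCount n x ≤ walkCount n (fun i => x i % 2) := by
  suffices ∀ s : Finset (Fin d), walkCount n x ≤ walkCount n (s.piecewise (fun i => x i % 2) x) by
    simpa using this Finset.univ
  intro s
  induction s using Finset.induction_on with
  | empty => simp
  | insert j s hj ih =>
    rw [Finset.piecewise_insert]
    have h := walkCount_le_walkCount_update_emod_two n (s.piecewise (fun i => x i % 2) x) j
    rw [Finset.piecewise_eq_of_notMem _ _ _ hj] at h
    exact ih.trans h

lemma walkCount_le_walkCount_sub_sum_single (n : ℕ) (x : Fin d → ℤ) (s : Finset (Fin d)) :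
    walkCount n x ≤ walkCount (n + s.card) (x - ∑ i ∈ s, Pi.single i 1) := by
  induction s using Finset.induction_on with
  | empty => simp
  | insert j s hj ih =>
    have hstep : x - ∑ i ∈ insert j s, Pi.single i 1 =
        x - ∑ i ∈ s, Pi.single i 1 + unitStep (j, false) := by
      rw [Finset.sum_insert hj, unitStep, if_neg Bool.false_ne_true, Pi.single_neg]
      abel
    rw [Finset.card_insert_of_notMem hj, ← add_assoc, hstep]
    exact ih.trans (walkCount_le_walkCount_succ_add_unitStep _ _ _)

lemma exists_walkCount_le_walkCount_zero (n : ℕ) (x : Fin d → ℤ) :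
    ∃ k ≤ d, walkCount n x ≤ walkCount (n + k) (0 : Fin d → ℤ) := by
  set s := Finset.univ.filter fun i => x i % 2 = 1
  have hs : (fun i => x i % 2) = ∑ i ∈ s, Pi.single i 1 := by
    ext i
    simp only [s, Finset.sum_apply, Pi.single_apply, Finset.sum_ite_eq, Finset.mem_filter,
      Finset.mem_univ, true_and]
    split_ifs <;> omega
  refine ⟨s.card, (Finset.card_le_univ s).trans_eq (Fintype.card_fin d), ?_⟩
  simpa [← hs] using (walkCount_le_walkCount_emod_two n x).trans
    (walkCount_le_walkCount_sub_sum_single n _ s)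

lemma two_mul_natCast_mul_inv_self (d : ℕ) [NeZero d] : (2 * d : ℝ≥0∞) * (2 * d : ℝ≥0∞)⁻¹ = 1 :=
  ENNReal.mul_inv_cancel (by simp [NeZero.ne d]) (by finiteness)

variable {Ω : Type*} [MeasurableSpace Ω] {μ : Measure Ω} [IsProbabilityMeasure μ]

lemma measure_compl_range_unitStep [NeZero d] {W : Ω → Fin d → ℤ} (hW : Measurable W)
    (hstep : ∀ v, IsUnitStep v → μ {ω | W ω = v} = (2 * d : ℝ≥0∞)⁻¹) :
    μ (W ⁻¹' Set.range unitStep)ᶜ = 0 := by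
  have hrange : W ⁻¹' Set.range unitStep = ⋃ p, {ω | W ω = unitStep p} := by
    ext ω; simp [eq_comm]
  have hdisj : Pairwise (Disjoint on fun p => {ω | W ω = unitStep (d := d) p}) :=
    fun p q hpq => Set.disjoint_left.mpr fun ω hp hq => hpq (unitStep_injective (hp.symm.trans hq))
  rw [prob_compl_eq_zero_iff (hW (Set.finite_range _).measurableSet), hrange,
    measure_iUnion hdisj fun p => hW (measurableSet_singleton _), tsum_fintype]
  simp only [fun p => hstep _ (isUnitStep_unitStep p), Finset.sum_const, Finset.card_univ]
  rw [Fintype.card_prod, Fintype.card_fin, Fintype.card_bool, nsmul_eq_mul, Nat.cast_mul,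
    Nat.cast_ofNat, mul_comm (d : ℝ≥0∞), two_mul_natCast_mul_inv_self]

lemma measure_add_eq_sum [NeZero d] {Z W : Ω → Fin d → ℤ} (hZ : Measurable Z)
    (hW : Measurable W) (hZW : IndepFun Z W μ) (hstep : ∀ v, IsUnitStep v → μ {ω | W ω = v} = (2 * d : ℝ≥0∞)⁻¹)
    (x : Fin d → ℤ) :
    μ {ω | Z ω + W ω = x} = ∑ p, μ {ω | Z ω = x - unitStep p} * (2 * d : ℝ≥0∞)⁻¹ := by
  have hsplit : {ω | Z ω + W ω = x} ∩ W ⁻¹' Set.range unitStep =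
      ⋃ p, Z ⁻¹' {x - unitStep p} ∩ W ⁻¹' {unitStep p} := by
    ext ω
    simp only [Set.mem_inter_iff, Set.mem_ofPred_eq, Set.mem_preimage, Set.mem_range,
      Set.mem_iUnion, Set.mem_singleton_iff]
    constructor
    · rintro ⟨hx, p, hp⟩
      exact ⟨p, by rw [← hx, ← hp, add_sub_cancel_right], hp.symm⟩
    · rintro ⟨p, hZp, hWp⟩
      exact ⟨by rw [hZp, hWp, sub_add_cancel], p, hWp.symm⟩
  have hdisj : Pairwise (Disjoint on fun p => Z ⁻¹' {x - unitStep p} ∩ W ⁻¹' {unitStep p}) :=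
    fun p q hpq => Set.disjoint_left.mpr fun ω hp hq =>
      hpq (unitStep_injective (hp.2.symm.trans hq.2))
  rw [← measure_inter_conull (measure_compl_range_unitStep hW hstep), hsplit,
    measure_iUnion hdisj fun p =>
      (hZ (measurableSet_singleton _)).inter (hW (measurableSet_singleton _)), tsum_fintype]
  refine Finset.sum_congr rfl fun p _ => ?_
  rw [hZW.measure_inter_preimage_eq_mul _ _ (measurableSet_singleton _) (measurableSet_singleton _),
    ← hstep _ (isUnitStep_unitStep p)]
  rfl

lemma measure_sum_range_eq_walkCount [NeZero d] {X : ℕ → Ω → Fin d → ℤ}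
    (hX : ∀ i, Measurable (X i)) (hindep : iIndepFun X μ)
    (hstep : ∀ i v, IsUnitStep v → μ {ω | X i ω = v} = (2 * d : ℝ≥0∞)⁻¹)
    (n : ℕ) (x : Fin d → ℤ) :
    μ {ω | ∑ i ∈ Finset.range n, X i ω = x} = walkCount n x * (2 * d : ℝ≥0∞)⁻¹ ^ n := by
  induction n generalizing x with
  | zero =>
    rcases eq_or_ne x 0 with rfl | hx
    · simp [walkCount]
    · simp [walkCount, hx, Ne.symm hx]
  | succ n ih =>
    have hZ : Measurable fun ω => ∑ i ∈ Finset.range n, X i ω :=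
      Finset.measurable_sum _ fun i _ => hX i
    have hZW : IndepFun (fun ω => ∑ i ∈ Finset.range n, X i ω) (X n) μ := by
      simpa [Finset.sum_fn] using hindep.indepFun_finsetSum_of_notMem hX Finset.notMem_range_self
    simp only [Finset.sum_range_succ, measure_add_eq_sum hZ (hX n) hZW (hstep n), ih, walkCount,
      Nat.cast_sum, Finset.sum_mul, pow_succ, mul_assoc]

theorem exists_measure_sum_range_le_pow_mul_measure_return [NeZero d] {X : ℕ → Ω → Fin d → ℤ}
    (hX : ∀ i, Measurable (X i)) (hindep : iIndepFun X μ)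
    (hstep : ∀ i v, IsUnitStep v → μ {ω | X i ω = v} = (2 * d : ℝ≥0∞)⁻¹) (n : ℕ) (x : Fin d → ℤ) :
    ∃ k ≤ d, μ {ω | ∑ i ∈ Finset.range n, X i ω = x} ≤
      (2 * d) ^ k * μ {ω | ∑ i ∈ Finset.range (n + k), X i ω = 0} := by
  obtain ⟨k, hkd, hk⟩ := exists_walkCount_le_walkCount_zero n x
  refine ⟨k, hkd, ?_⟩
  rw [measure_sum_range_eq_walkCount hX hindep hstep, measure_sum_range_eq_walkCount hX hindep hstep]
  set q : ℝ≥0∞ := (2 * d)⁻¹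
  have hq : (2 * d : ℝ≥0∞) * q = 1 := two_mul_natCast_mul_inv_self d
  calc (walkCount n x : ℝ≥0∞) * q ^ n ≤ walkCount (n + k) 0 * q ^ n := by gcongr
    _ = walkCount (n + k) 0 * q ^ n * (2 * d * q) ^ k := by rw [hq, one_pow, mul_one]
    _ = (2 * d) ^ k * (walkCount (n + k) 0 * q ^ (n + k)) := by ring

end SimpleRandomWalk

open SimpleRandomWalk in
/-- for the simple symmetric random walk on ℤ³ and every `x` and `n`,
`P(Y_n = x) ≤ 6³ (P(Y_n = 0) + P(Y_{n+1} = 0) + P(Y_{n+2} = 0) + P(Y_{n+3} = 0))`. -/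
theorem simple_walk_Z3_point_prob_le_return_probs
    {Ω : Type*} [MeasurableSpace Ω] (μ : Measure Ω) [IsProbabilityMeasure μ]
    (X : ℕ → Ω → (Fin 3 → ℤ))
    (hmeas : ∀ i, Measurable (X i))
    (hindep : iIndepFun X μ)
    (hstep : ∀ i v, IsUnitStep v → μ {ω | X i ω = v} = 1 / 6)
    (Y : ℕ → Ω → (Fin 3 → ℤ))
    (hY : ∀ n ω, Y n ω = ∑ i ∈ Finset.range n, X i ω) :
    ∀ (x : Fin 3 → ℤ) (n : ℕ),
      μ {ω | Y n ω = x} ≤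
        6 ^ 3 * (μ {ω | Y n ω = 0} + μ {ω | Y (n + 1) ω = 0}
          + μ {ω | Y (n + 2) ω = 0} + μ {ω | Y (n + 3) ω = 0}) := by
  intro x n
  obtain ⟨k, hk3, hk⟩ := exists_measure_sum_range_le_pow_mul_measure_return hmeas hindep
    (fun i v hv => by rw [hstep i v hv]; norm_num) n x
  have hreturn : μ {ω | Y (n + k) ω = 0} ≤ ∑ j ∈ Finset.range 4, μ {ω | Y (n + j) ω = 0} :=
    Finset.single_le_sum (f := fun j => μ {ω | Y (n + j) ω = 0}) (fun _ _ => bot_le)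
      (Finset.mem_range.mpr (by omega))
  simp only [Finset.sum_range_succ, Finset.sum_range_zero, zero_add, add_zero, hY] at hreturn ⊢
  calc _ ≤ (2 * 3) ^ k * μ {ω | ∑ i ∈ Finset.range (n + k), X i ω = 0} := by exact_mod_cast hk
    _ ≤ 6 ^ 3 * _ := by gcongr <;> norm_num
end

section
/- Let Z_n be a random walk on Z^k whose step distribution is a mixture p·μ + q·ν, where p + q = 1, p, q > 0, μ is the step distribution of a walk X satisfying the uniform bound P(X_n = x) ≤ c/n^{3/2} for all x and n ≥ 1, and ν is any step distribution on Z^k. Then there exists a constant b > 0 such that P(Z_n = z) ≤ b / n^{3/2} for all z ∈ Z^k and all n ≥ 1. -/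
/-!
The law of `Z_n` is the `n`-th convolution power of `p • μ₀ + q • ν`. Expanding the steps one at a
time, and using that convolving with a probability measure never enlarges the largest atom, every
atom of it is at most `E[s(B)]`, where `B ~ Bin(n, p)` counts the `μ₀`-steps and
`s(j) = sup_x P(X_j = x)`. On `B > np/2` we have `s(B) ≤ c (np/2)^{-3/2}`, while by Chernoff
`P(B ≤ np/2) ≤ e^{np/2} E[e^{-B}] = e^{np/2} (p/e + q)^n ≤ e^{-p(1/2 - 1/e) n}`, which decays faster
than any power of `n`.
-/

open MeasureTheory ProbabilityTheory

open scoped ENNReal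

namespace MeasureTheory.Measure

section ConvPow

variable {M : Type*} [AddCommMonoid M] [MeasurableSpace M]

noncomputable def convPow (ρ : Measure M) : ℕ → Measure M
  | 0 => dirac 0
  | n + 1 => convPow ρ n ∗ ρ

@[simp]
theorem convPow_zero (ρ : Measure M) : convPow ρ 0 = dirac 0 := rfl

theorem convPow_succ (ρ : Measure M) (n : ℕ) : convPow ρ (n + 1) = convPow ρ n ∗ ρ := rfl

instance sFinite_convPow (ρ : Measure M) [SFinite ρ] (n : ℕ) : SFinite (convPow ρ n) := by
  induction n with
  | zero => rw [convPow_zero]; infer_instance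
  | succ n ih => rw [convPow_succ]; infer_instance

instance isProbabilityMeasure_convPow [MeasurableAdd₂ M] (ρ : Measure M) [IsProbabilityMeasure ρ]
    (n : ℕ) : IsProbabilityMeasure (convPow ρ n) := by
  induction n with
  | zero => rw [convPow_zero]; infer_instance
  | succ n ih => rw [convPow_succ]; infer_instance

end ConvPow

variable {M : Type*} [AddCommGroup M] [MeasurableSpace M] [MeasurableAdd₂ M]
  [MeasurableSingletonClass M]

theorem conv_apply_singleton_le {τ σ : Measure M} [SFinite τ] [SFinite σ] {B : ℝ≥0∞}
    (hτ : ∀ x, τ {x} ≤ B) (z : M) : (τ ∗ σ) {z} ≤ B * σ Set.univ :=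
  calc (τ ∗ σ) {z} = ∫⁻ y, τ {z - y} ∂σ := by
        rw [conv, map_apply measurable_add (measurableSet_singleton z),
          prod_apply_symm (measurable_add (measurableSet_singleton z))]
        congr! with y
        ext x
        simp [eq_sub_iff_add_eq]
    _ ≤ ∫⁻ _, B ∂σ := lintegral_mono fun y => hτ _
    _ = B * σ Set.univ := lintegral_const B

end MeasureTheory.Measure

open Measure

theorem ProbabilityTheory.iIndepFun.map_sum_range_eq_convPow {M : Type*} [AddCommMonoid M]
    [MeasurableSpace M] [MeasurableAdd₂ M] {Ω : Type*} [MeasurableSpace Ω] {μ : Measure Ω}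
    [IsProbabilityMeasure μ] {S : ℕ → Ω → M} (hindep : iIndepFun S μ)
    (hmeas : ∀ i, Measurable (S i)) {ρ : Measure M} (hlaw : ∀ i, μ.map (S i) = ρ) (n : ℕ) :
    μ.map (fun ω => ∑ i ∈ Finset.range n, S i ω) = convPow ρ n := by
  induction n with
  | zero => simp
  | succ n ih =>
    have hsum : (fun ω => ∑ i ∈ Finset.range (n + 1), S i ω)
        = (∑ i ∈ Finset.range n, S i) + S n := by
      ext ω
      simp [Finset.sum_range_succ]
    have hsum_meas : Measurable (∑ i ∈ Finset.range n, S i) := by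
      simpa only [← Finset.sum_apply] using Finset.measurable_sum _ fun i _ => hmeas i
    have hind := hindep.indepFun_finsetSum_of_notMem hmeas (Finset.notMem_range_self (n := n))
    rw [hsum, hind.map_add_eq_map_conv_map hsum_meas (hmeas n), convPow_succ, hlaw, ← ih]
    congr
    ext ω
    simp

/-- `(bernoulliStep p q)^[n] g i = E[g (i + B)]` with `B ~ Bin(n, p)` when `p + q = 1`. -/
noncomputable def bernoulliStep (p q : ℝ≥0∞) (g : ℕ → ℝ≥0∞) (i : ℕ) : ℝ≥0∞ :=
  p * g (i + 1) + q * g i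

theorem bernoulliStep_mono (p q : ℝ≥0∞) : Monotone (bernoulliStep p q) := fun _ _ h i => by
  simp only [bernoulliStep]
  gcongr <;> apply h

theorem bernoulliStep_iterate_const_add_mul_pow (p q A B r : ℝ≥0∞) (n j : ℕ) :
    (bernoulliStep p q)^[n] (fun j => A + B * r ^ j) j
      = A * (p + q) ^ n + B * r ^ j * (p * r + q) ^ n := by
  induction n generalizing j with
  | zero => simp
  | succ n ih =>
    rw [Function.iterate_succ_apply', bernoulliStep, ih, ih]
    ring

section Mixture

variable {M : Type*} [AddCommGroup M] [MeasurableSpace M] [MeasurableAdd₂ M]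
  [MeasurableSingletonClass M] (μ₀ ν : Measure M) [SFinite μ₀] [IsProbabilityMeasure ν]
  (p q : ℝ≥0∞)

/-- A `μ₀`-step of the mixture joins the convolution power of `μ₀`, a `ν`-step is absorbed
into `σ`. -/
theorem conv_conv_convPow_mixture_apply_singleton_le (n i : ℕ) (σ : Measure M)
    [IsProbabilityMeasure σ] (z : M) :
    (convPow μ₀ i ∗ σ ∗ convPow (p • μ₀ + q • ν) n) {z}
      ≤ (bernoulliStep p q)^[n] (fun j => ⨆ x, convPow μ₀ j {x}) i := by
  induction n generalizing i σ with
  | zero =>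
    simpa using conv_apply_singleton_le (σ := σ) (fun x => le_iSup (fun x => convPow μ₀ i {x}) x) z
  | succ n ih =>
    set ρ := p • μ₀ + q • ν
    have hsplit : convPow μ₀ i ∗ σ ∗ convPow ρ (n + 1)
        = p • (convPow μ₀ (i + 1) ∗ σ ∗ convPow ρ n)
          + q • (convPow μ₀ i ∗ (σ ∗ ν) ∗ convPow ρ n) := by
      rw [convPow_succ, conv_comm (convPow ρ n), ← conv_assoc σ, conv_add, conv_smul_right,
        conv_smul_right, add_conv, conv_smul_left, conv_smul_left, conv_add, conv_smul_right,
        conv_smul_right, conv_comm σ μ₀, conv_assoc μ₀, ← conv_assoc (convPow μ₀ i) μ₀,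
        ← convPow_succ]
    rw [hsplit, Function.iterate_succ_apply', bernoulliStep]
    simp only [Measure.add_apply, Measure.smul_apply, smul_eq_mul]
    gcongr <;> apply ih

theorem convPow_mixture_apply_singleton_le (n : ℕ) (z : M) :
    convPow (p • μ₀ + q • ν) n {z}
      ≤ (bernoulliStep p q)^[n] (fun j => ⨆ x, convPow μ₀ j {x}) 0 := by
  simpa using conv_conv_convPow_mixture_apply_singleton_le μ₀ ν p q n 0 (dirac 0) z

end Mixture

theorem exp_mul_add_pow_le_exp {p q : ℝ} (hp : 0 ≤ p) (hq : 0 ≤ q) (hpq : p + q = 1) (n : ℕ) :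
    Real.exp (n * (p / 2)) * (p * Real.exp (-1) + q) ^ n
      ≤ Real.exp (-(p * (1 / 2 - Real.exp (-1)) * n)) := by
  have hbase : p * Real.exp (-1) + q ≤ Real.exp (p * Real.exp (-1) - p) := by
    linarith [Real.add_one_le_exp (p * Real.exp (-1) - p)]
  calc Real.exp (n * (p / 2)) * (p * Real.exp (-1) + q) ^ n
      ≤ Real.exp (n * (p / 2)) * Real.exp (p * Real.exp (-1) - p) ^ n := by gcongr
    _ = Real.exp (-(p * (1 / 2 - Real.exp (-1)) * n)) := by
        rw [← Real.exp_nat_mul, ← Real.exp_add]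
        ring_nf

theorem exp_neg_mul_le_div_rpow {a : ℝ} (ha : 0 < a) {n : ℕ} (hn : 1 ≤ n) :
    Real.exp (-(a * n)) ≤ 2 / a ^ 2 / (n : ℝ) ^ ((3 : ℝ) / 2) := by
  have hn' : (1 : ℝ) ≤ n := by exact_mod_cast hn
  have hquad : (a * n) ^ 2 / 2 ≤ Real.exp (a * n) := by
    nlinarith [Real.quadratic_le_exp_of_nonneg (by positivity : 0 ≤ a * n)]
  have hpow : (n : ℝ) ^ ((3 : ℝ) / 2) ≤ (n : ℝ) ^ 2 := by
    exact_mod_cast Real.rpow_le_rpow_of_exponent_le hn' (by norm_num : (3 : ℝ) / 2 ≤ 2)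
  calc Real.exp (-(a * n)) = 1 / Real.exp (a * n) := by rw [Real.exp_neg, one_div]
    _ ≤ 1 / ((a * n) ^ 2 / 2) := by gcongr
    _ = 2 / a ^ 2 / (n : ℝ) ^ 2 := by field_simp
    _ ≤ 2 / a ^ 2 / (n : ℝ) ^ ((3 : ℝ) / 2) := by gcongr

theorem bernoulliStep_iterate_le_of_le_rpow {p q c : ℝ} (hp : 0 < p) (hq : 0 ≤ q)
    (hpq : p + q = 1) (hc : 0 ≤ c) {g : ℕ → ℝ≥0∞} (hg_one : ∀ j, g j ≤ 1)
    (hg : ∀ j, 1 ≤ j → g j ≤ ENNReal.ofReal (c / (j : ℝ) ^ ((3 : ℝ) / 2))) {n : ℕ} (hn : 1 ≤ n) :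
    (bernoulliStep (ENNReal.ofReal p) (ENNReal.ofReal q))^[n] g 0
      ≤ ENNReal.ofReal ((c / (p / 2) ^ ((3 : ℝ) / 2) + 2 / (p * (1 / 2 - Real.exp (-1))) ^ 2)
          / (n : ℝ) ^ ((3 : ℝ) / 2)) := by
  set t : ℝ := n * (p / 2)
  have ht : 0 < t := by positivity
  -- `1 ≤ e^{t - j}` below the threshold `t`: the Chernoff tilt
  have hg_le : g ≤ fun j => ENNReal.ofReal (c / t ^ ((3 : ℝ) / 2))
      + ENNReal.ofReal (Real.exp t) * ENNReal.ofReal (Real.exp (-1)) ^ j := by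
    intro j
    rcases lt_or_ge t j with htj | hjt
    · have hj : 0 < j := by exact_mod_cast ht.trans htj
      refine (hg j hj).trans (le_add_right (ENNReal.ofReal_le_ofReal ?_))
      gcongr
    · refine (hg_one j).trans (le_add_left ?_)
      rw [← ENNReal.ofReal_pow (Real.exp_pos _).le, ← ENNReal.ofReal_mul (Real.exp_pos _).le,
        ← Real.exp_nat_mul, ← Real.exp_add]
      exact ENNReal.one_le_ofReal.mpr (Real.one_le_exp (by linarith))
  have ha : 0 < p * (1 / 2 - Real.exp (-1)) := mul_pos hp (by linarith [Real.exp_neg_one_lt_half])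
  have hbulk : c / t ^ ((3 : ℝ) / 2) = c / (p / 2) ^ ((3 : ℝ) / 2) / (n : ℝ) ^ ((3 : ℝ) / 2) := by
    rw [div_div, ← Real.mul_rpow (by positivity) (by positivity), mul_comm]
  have htail := (exp_mul_add_pow_le_exp hp.le hq hpq n).trans (exp_neg_mul_le_div_rpow ha hn)
  calc (bernoulliStep (ENNReal.ofReal p) (ENNReal.ofReal q))^[n] g 0
      ≤ (bernoulliStep (ENNReal.ofReal p) (ENNReal.ofReal q))^[n] (fun j =>
          ENNReal.ofReal (c / t ^ ((3 : ℝ) / 2))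
            + ENNReal.ofReal (Real.exp t) * ENNReal.ofReal (Real.exp (-1)) ^ j) 0 :=
        (bernoulliStep_mono _ _).iterate n hg_le 0
    _ = ENNReal.ofReal (c / t ^ ((3 : ℝ) / 2) + Real.exp t * (p * Real.exp (-1) + q) ^ n) := by
        rw [bernoulliStep_iterate_const_add_mul_pow, ← ENNReal.ofReal_add hp.le hq, hpq,
          ENNReal.ofReal_one, one_pow, mul_one, pow_zero, mul_one,
          ← ENNReal.ofReal_mul hp.le, ← ENNReal.ofReal_add (by positivity) hq,
          ← ENNReal.ofReal_pow (by positivity), ← ENNReal.ofReal_mul (by positivity),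
          ← ENNReal.ofReal_add (by positivity) (by positivity)]
    _ ≤ _ := by
        refine ENNReal.ofReal_le_ofReal ?_
        rw [hbulk, add_div]
        gcongr

/-- a random walk whose step distribution is a mixture `p·μ₀ + q·ν`, with
`p, q > 0`, `p + q = 1`, and such that the walk with step distribution `μ₀` satisfies the
uniform bound `P(X_n = x) ≤ c/n^{3/2}`, itself satisfies a uniform bound
`P(Z_n = z) ≤ b/n^{3/2}` for some constant `b > 0`. -/
theorem mixture_walk_uniform_decay
    {k : ℕ}
    {Ω : Type*} [MeasurableSpace Ω] (μ : Measure Ω) [IsProbabilityMeasure μ]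
    (μ₀ ν : Measure (Fin k → ℤ)) [IsProbabilityMeasure μ₀] [IsProbabilityMeasure ν]
    (p q : ℝ) (hp : 0 < p) (hq : 0 < q) (hpq : p + q = 1)
    -- the pure walk with step law μ₀
    (XS : ℕ → Ω → (Fin k → ℤ))
    (hXmeas : ∀ i, Measurable (XS i))
    (hXindep : iIndepFun XS μ)
    (hXlaw : ∀ i, Measure.map (XS i) μ = μ₀)
    (Xw : ℕ → Ω → (Fin k → ℤ))
    (hXw : ∀ n ω, Xw n ω = ∑ i ∈ Finset.range n, XS i ω)
    -- the mixture walk with step law p·μ₀ + q·ν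
    (ZS : ℕ → Ω → (Fin k → ℤ))
    (hZmeas : ∀ i, Measurable (ZS i))
    (hZindep : iIndepFun ZS μ)
    (hZlaw : ∀ i, Measure.map (ZS i) μ = ENNReal.ofReal p • μ₀ + ENNReal.ofReal q • ν)
    (Zw : ℕ → Ω → (Fin k → ℤ))
    (hZw : ∀ n ω, Zw n ω = ∑ i ∈ Finset.range n, ZS i ω)
    -- the uniform bound for the pure walk
    (c : ℝ) (hc : 0 < c)
    (hXbound : ∀ (x : Fin k → ℤ) (n : ℕ), 1 ≤ n →
      (μ {ω | Xw n ω = x}).toReal ≤ c / (n : ℝ) ^ ((3 : ℝ) / 2)) :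
    ∃ b : ℝ, 0 < b ∧ ∀ (z : Fin k → ℤ) (n : ℕ), 1 ≤ n →
      (μ {ω | Zw n ω = z}).toReal ≤ b / (n : ℝ) ^ ((3 : ℝ) / 2) := by
  refine ⟨c / (p / 2) ^ ((3 : ℝ) / 2) + 2 / (p * (1 / 2 - Real.exp (-1))) ^ 2, by positivity,
    fun z n hn => ENNReal.toReal_le_of_le_ofReal (by positivity) ?_⟩
  have hX : ∀ j x, μ {ω | Xw j ω = x} = convPow μ₀ j {x} := fun j x => by
    rw [← hXindep.map_sum_range_eq_convPow hXmeas hXlaw j,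
      map_apply (by fun_prop) (measurableSet_singleton x)]
    simp only [hXw]
    rfl
  have hZ : μ {ω | Zw n ω = z} = convPow (ENNReal.ofReal p • μ₀ + ENNReal.ofReal q • ν) n {z} := by
    rw [← hZindep.map_sum_range_eq_convPow hZmeas hZlaw n,
      map_apply (by fun_prop) (measurableSet_singleton z)]
    simp only [hZw]
    rfl
  rw [hZ]
  refine (convPow_mixture_apply_singleton_le μ₀ ν _ _ n z).trans
    (bernoulliStep_iterate_le_of_le_rpow hp hq.le hpq hc.le
      (fun j => iSup_le fun x => prob_le_one) (fun j hj => iSup_le fun x => ?_) hn)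
  rw [← hX, ← ENNReal.ofReal_toReal (measure_ne_top μ _)]
  exact ENNReal.ofReal_le_ofReal (hXbound x j hj)
end

section
/- Let Y_n be a random walk on Z^k with i.i.d. steps. If Y is recurrent (returns to 0 with probability 1), then for every positive integer m the subsampled walk Y^0_i = Y_{mi} is also recurrent. -/
/-!
Let `u n` be the probability that the walk is at `0` at time `n`. It is supermultiplicative,
`u a * u b ≤ u (a + b)`, because a visit to `0` at time `a` followed by an independent, identically
distributed return of the walk shifted by `a` after `b` more steps is a visit at time `a + b`.
Recurrence makes every shifted walk return almost surely, so the walk visits `0` infinitely often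
and Borel–Cantelli forces `∑ u n = ∞`. Some residue class mod `m` carries an infinite part of this
sum, and a fixed visit of suitable length moves it onto the multiples of `m`: `∑ u (m n) = ∞`.
Finally, the events "the last visit to `0` at a multiple of `m` is at time `m n`" are disjoint and
have probability `u (m n) * q`, where `q` is the probability that the walk never returns at a
multiple of `m`; hence `q = 0`.
-/

open MeasureTheory ProbabilityTheory Filter Finset
open scoped ENNReal

section Supermultiplicative

variable {u : ℕ → ℝ≥0∞}

lemma pow_le_apply_mul_of_supermul (h0 : 1 ≤ u 0) (hu : ∀ a b, u a * u b ≤ u (a + b))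
    (a j : ℕ) : u a ^ j ≤ u (j * a) := by
  induction j with
  | zero => simpa using h0
  | succ j ih =>
    calc u a ^ (j + 1) = u a ^ j * u a := pow_succ _ _
      _ ≤ u (j * a) * u a := by gcongr
      _ ≤ u ((j + 1) * a) := by rw [add_one_mul]; exact hu _ _

lemma ENNReal.exists_tsum_mul_add_eq_top {f : ℕ → ℝ≥0∞} (hf : ∑' n, f n = ⊤) {m : ℕ}
    (hm : 0 < m) : ∃ r < m, ∑' q, f (q * m + r) = ⊤ := by
  have : NeZero m := ⟨hm.ne'⟩
  have hsplit : ∑' n, f n = ∑ r : Fin m, ∑' q, f (q * m + r) := by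
    rw [← (Nat.divModEquiv m).symm.tsum_eq, ENNReal.tsum_prod', ENNReal.tsum_comm, tsum_fintype]
    rfl
  by_contra! h
  have hfin : ∑ r : Fin m, ∑' q, f (q * m + r) < ⊤ :=
    ENNReal.sum_lt_top.2 fun r _ => (h r r.2).lt_top
  exact hfin.ne (hsplit ▸ hf)

lemma tsum_apply_mul_eq_top_of_supermul (h0 : 1 ≤ u 0) (hu : ∀ a b, u a * u b ≤ u (a + b))
    (htop : ∑' n, u n = ⊤) {m : ℕ} (hm : 0 < m) : ∑' n, u (m * n) = ⊤ := by
  obtain ⟨r, -, hr⟩ := ENNReal.exists_tsum_mul_add_eq_top htop hm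
  obtain ⟨q₀, hq₀⟩ : ∃ q₀, u (q₀ * m + r) ≠ 0 := by
    by_contra! h
    simp [h] at hr
  obtain ⟨k, rfl⟩ : ∃ k, m = k + 1 := ⟨m - 1, by omega⟩
  -- `k` further returns at time `q₀ (k + 1) + r` complete `q (k + 1) + r` to a multiple of `k + 1`.
  set s := k * (q₀ * (k + 1) + r)
  have hs : u s ≠ 0 :=
    ne_bot_of_le_ne_bot (pow_ne_zero k hq₀) (pow_le_apply_mul_of_supermul h0 hu _ k)
  have hcomplete : ∀ q, u (q * (k + 1) + r) * u s ≤ u ((k + 1) * (q + (k * q₀ + r))) := fun q => by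
    convert hu _ s using 2
    ring
  refine top_unique ?_
  calc ⊤ = ∑' q, u (q * (k + 1) + r) * u s := by
        rw [ENNReal.tsum_mul_right, hr, ENNReal.top_mul hs]
    _ ≤ ∑' q, u ((k + 1) * (q + (k * q₀ + r))) := ENNReal.tsum_le_tsum hcomplete
    _ ≤ ∑' n, u ((k + 1) * n) :=
      ENNReal.tsum_comp_le_tsum_of_injective (add_left_injective _) fun n => u ((k + 1) * n)

end Supermultiplicative

lemma MeasurableSpace.comap_pi_le_biSup_comap {ι κ G Ω : Type*} [MeasurableSpace G]
    {X : ι → Ω → G} (g : κ → ι) {s : Set ι} (hg : ∀ k, g k ∈ s) :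
    MeasurableSpace.comap (fun ω k => X (g k) ω) MeasurableSpace.pi
      ≤ ⨆ i ∈ s, MeasurableSpace.comap (X i) ‹_› := by
  simp_rw [MeasurableSpace.pi, MeasurableSpace.comap_iSup, MeasurableSpace.comap_comp]
  exact iSup_le fun k => le_iSup₂_of_le (g k) (hg k) le_rfl

namespace ProbabilityTheory

lemma iIndepFun.indepFun_of_disjoint_range {ι κ κ' G Ω : Type*} [MeasurableSpace G]
    [MeasurableSpace Ω] {μ : Measure Ω} {X : ι → Ω → G} (hindep : iIndepFun X μ)
    (hmeas : ∀ i, Measurable (X i)) {g : κ → ι} {h : κ' → ι}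
    (hgh : Disjoint (Set.range g) (Set.range h)) :
    IndepFun (fun ω k => X (g k) ω) (fun ω k => X (h k) ω) μ := by
  rw [IndepFun_iff_Indep]
  exact indep_of_indep_of_le_right
    (indep_of_indep_of_le_left
      (indep_iSup_of_disjoint (fun i => (hmeas i).comap_le) hindep.iIndep hgh)
      (MeasurableSpace.comap_pi_le_biSup_comap g Set.mem_range_self))
    (MeasurableSpace.comap_pi_le_biSup_comap h Set.mem_range_self)

lemma identDistrib_shift {G Ω : Type*} [MeasurableSpace G] [MeasurableSpace Ω] {μ : Measure Ω}
    {X : ℕ → Ω → G} (hindep : iIndepFun X μ) (hident : ∀ i j, IdentDistrib (X i) (X j) μ μ)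
    (N : ℕ) : IdentDistrib (fun ω i => X (N + i) ω) (fun ω i => X i ω) μ μ :=
  IdentDistrib.pi (fun i => hident (N + i) i) (hindep.precomp (add_right_injective N)) hindep

end ProbabilityTheory

namespace RandomWalk

variable {G : Type*} [AddCommMonoid G]

def zeroAt (n : ℕ) : Set (ℕ → G) := {x | ∑ i ∈ range n, x i = 0}

def returnsAlong (m : ℕ) : Set (ℕ → G) := {x | ∃ n > 0, x ∈ zeroAt (m * n)}

lemma mem_zeroAt_add_iff {x : ℕ → G} {a b : ℕ} (ha : x ∈ zeroAt a) :
    x ∈ zeroAt (a + b) ↔ (fun i => x (a + i)) ∈ zeroAt b := by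
  simp only [zeroAt, Set.mem_ofPred_eq, sum_range_add] at ha ⊢
  rw [ha, zero_add]

lemma frequently_mem_zeroAt {x : ℕ → G} (hx : ∀ N, (fun i => x (N + i)) ∈ returnsAlong 1) :
    ∃ᶠ n in atTop, x ∈ zeroAt n := by
  refine frequently_atTop.2 fun a => ?_
  induction a with
  | zero => exact ⟨0, le_rfl, by simp [zeroAt]⟩
  | succ a ih =>
    obtain ⟨n, hn, hxn⟩ := ih
    obtain ⟨l, hl, hxl⟩ := hx n
    exact ⟨n + 1 * l, by omega, (mem_zeroAt_add_iff hxn).2 hxl⟩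

lemma shift_mem_returnsAlong {x : ℕ → G} {m n n' : ℕ} (hn : x ∈ zeroAt (m * n))
    (hn' : x ∈ zeroAt (m * n')) (h : n < n') : (fun i => x (m * n + i)) ∈ returnsAlong m :=
  ⟨n' - n, by omega, (mem_zeroAt_add_iff hn).1 (by rwa [← mul_add, Nat.add_sub_cancel' h.le])⟩

variable [MeasurableSpace G] [MeasurableSingletonClass G] [MeasurableAdd₂ G]

lemma measurableSet_zeroAt (n : ℕ) : MeasurableSet (zeroAt (G := G) n) :=
  (Finset.measurable_sum _ fun i _ => measurable_pi_apply i) (measurableSet_singleton 0)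

lemma measurableSet_returnsAlong (m : ℕ) : MeasurableSet (returnsAlong (G := G) m) := by
  simp only [returnsAlong, Set.ofPred_exists]
  exact .iUnion fun n => (MeasurableSet.const (n > 0)).inter (measurableSet_zeroAt _)

variable {Ω : Type*} [MeasurableSpace Ω] {μ : Measure Ω} {X : ℕ → Ω → G}

lemma measure_zeroAt_inter_shift (hmeas : ∀ i, Measurable (X i)) (hindep : iIndepFun X μ)
    (hident : ∀ i j, IdentDistrib (X i) (X j) μ μ) (a : ℕ) {B : Set (ℕ → G)}
    (hB : MeasurableSet B) :
    μ ((fun ω i => X i ω) ⁻¹' zeroAt a ∩ (fun ω i => X (a + i) ω) ⁻¹' B)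
      = μ ((fun ω i => X i ω) ⁻¹' zeroAt a) * μ ((fun ω i => X i ω) ⁻¹' B) := by
  have hpast : (fun ω i => X i ω) ⁻¹' zeroAt a
      = (fun ω (i : Fin a) => X i ω) ⁻¹' {y | ∑ i, y i = 0} := by
    ext ω
    simp [zeroAt, Fin.sum_univ_eq_sum_range (fun i => X i ω)]
  have hdisj : Disjoint (Set.range (Fin.val : Fin a → ℕ)) (Set.range (a + ·)) := by
    refine Set.disjoint_left.2 ?_
    rintro _ ⟨i, rfl⟩ ⟨j, hj⟩
    dsimp only at hj
    omega
  have hsum_meas : MeasurableSet {y : Fin a → G | ∑ i, y i = 0} :=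
    (Finset.measurable_sum _ fun i _ => measurable_pi_apply i) (measurableSet_singleton 0)
  rw [hpast, (hindep.indepFun_of_disjoint_range hmeas hdisj).measure_inter_preimage_eq_mul
    _ _ hsum_meas hB, (identDistrib_shift hindep hident a).measure_mem_eq hB]

lemma measure_zeroAt_mul_le (hmeas : ∀ i, Measurable (X i)) (hindep : iIndepFun X μ)
    (hident : ∀ i j, IdentDistrib (X i) (X j) μ μ) (a b : ℕ) :
    μ ((fun ω i => X i ω) ⁻¹' zeroAt a) * μ ((fun ω i => X i ω) ⁻¹' zeroAt b)
      ≤ μ ((fun ω i => X i ω) ⁻¹' zeroAt (a + b)) := by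
  rw [← measure_zeroAt_inter_shift hmeas hindep hident a (measurableSet_zeroAt b)]
  exact measure_mono fun ω ⟨ha, hb⟩ => (mem_zeroAt_add_iff ha).2 hb

variable [IsProbabilityMeasure μ]

lemma tsum_measure_zeroAt_eq_top (hmeas : ∀ i, Measurable (X i)) (hindep : iIndepFun X μ)
    (hident : ∀ i j, IdentDistrib (X i) (X j) μ μ)
    (hrec : μ ((fun ω i => X i ω) ⁻¹' returnsAlong 1) = 1) :
    ∑' n, μ ((fun ω i => X i ω) ⁻¹' zeroAt n) = ⊤ := by
  have hshift (N : ℕ) : ∀ᵐ ω ∂μ, (fun i => X (N + i) ω) ∈ returnsAlong 1 := by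
    have hN := (identDistrib_shift hindep hident N).measure_mem_eq (measurableSet_returnsAlong 1)
    rw [hrec] at hN
    exact (ae_mem_iff_measure_eq ((measurable_pi_lambda _ fun i => hmeas _)
      (measurableSet_returnsAlong 1)).nullMeasurableSet).2 (by rw [hN, measure_univ])
  have hfreq : ∀ᵐ ω ∂μ, ∃ᶠ n in atTop, ω ∈ (fun ω i => X i ω) ⁻¹' zeroAt n :=
    (ae_all_iff.2 hshift).mono fun ω hω => frequently_mem_zeroAt hω
  by_contra hfin
  obtain ⟨ω, hω, hω'⟩ :=
    (hfreq.and (measure_eq_zero_iff_ae_notMem.1 (measure_setOfPred_frequently_eq_zero hfin))).exists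
  exact hω' hω

lemma measure_returnsAlong_eq_one_of_tsum_eq_top (hmeas : ∀ i, Measurable (X i))
    (hindep : iIndepFun X μ) (hident : ∀ i j, IdentDistrib (X i) (X j) μ μ) (m : ℕ)
    (htop : ∑' n, μ ((fun ω i => X i ω) ⁻¹' zeroAt (m * n)) = ⊤) :
    μ ((fun ω i => X i ω) ⁻¹' returnsAlong m) = 1 := by
  -- `E n`: the last visit to `0` at a multiple of `m` is at time `m n`.
  set E : ℕ → Set Ω := fun n =>
    (fun ω i => X i ω) ⁻¹' zeroAt (m * n) ∩ (fun ω i => X (m * n + i) ω) ⁻¹' (returnsAlong m)ᶜ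
  have hpath : Measurable (fun ω i => X i ω) := measurable_pi_lambda _ hmeas
  have hE_meas (n : ℕ) : MeasurableSet (E n) :=
    (hpath (measurableSet_zeroAt _)).inter
      ((measurable_pi_lambda _ fun i => hmeas _) (measurableSet_returnsAlong m).compl)
  have hE_disj : Pairwise (Function.onFun Disjoint E) := by
    intro n n' hne
    refine Set.disjoint_left.2 fun ω ⟨hn, hn_last⟩ ⟨hn', hn'_last⟩ => ?_
    rcases hne.lt_or_gt with h | h
    · exact hn_last (shift_mem_returnsAlong hn hn' h)
    · exact hn'_last (shift_mem_returnsAlong hn' hn h)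
  have hsum : (∑' n, μ ((fun ω i => X i ω) ⁻¹' zeroAt (m * n)))
      * μ ((fun ω i => X i ω) ⁻¹' (returnsAlong m)ᶜ) ≤ 1 :=
    calc _ = ∑' n, μ (E n) := by
          rw [← ENNReal.tsum_mul_right]
          exact tsum_congr fun n => (measure_zeroAt_inter_shift hmeas hindep hident _
            (measurableSet_returnsAlong m).compl).symm
      _ ≤ μ (⋃ n, E n) := tsum_meas_le_meas_iUnion_of_disjoint μ hE_meas hE_disj
      _ ≤ 1 := prob_le_one
  rw [htop] at hsum
  have hnever : μ ((fun ω i => X i ω) ⁻¹' returnsAlong m)ᶜ = 0 := by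
    by_contra h
    rw [Set.preimage_compl, ENNReal.top_mul h] at hsum
    simp at hsum
  exact (prob_compl_eq_zero_iff (hpath (measurableSet_returnsAlong m))).1 hnever

end RandomWalk

open RandomWalk

/-- if a random walk on ℤ^k with i.i.d. steps is recurrent, then for every
positive `m` the subsampled walk `Y^0_i = Y_{m·i}` is also recurrent. -/
theorem subsampled_walk_recurrent
    {k : ℕ}
    {Ω : Type*} [MeasurableSpace Ω] (μ : Measure Ω) [IsProbabilityMeasure μ]
    (X : ℕ → Ω → (Fin k → ℤ))
    (hmeas : ∀ i, Measurable (X i))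
    (hindep : iIndepFun X μ)
    (hident : ∀ i j, IdentDistrib (X i) (X j) μ μ)
    (Y : ℕ → Ω → (Fin k → ℤ))
    (hY : ∀ n ω, Y n ω = ∑ i ∈ Finset.range n, X i ω)
    (hrec : μ {ω | ∃ n > 0, Y n ω = 0} = 1) :
    ∀ m : ℕ, 0 < m → μ {ω | ∃ n > 0, Y (m * n) ω = 0} = 1 := by
  have hreturns (m : ℕ) :
      {ω | ∃ n > 0, Y (m * n) ω = 0} = (fun ω i => X i ω) ⁻¹' returnsAlong m := by
    ext ω
    simp [returnsAlong, zeroAt, hY]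
  have hrec' : μ ((fun ω i => X i ω) ⁻¹' returnsAlong 1) = 1 := by
    rw [← hreturns]
    simpa using hrec
  intro m hm
  rw [hreturns]
  exact measure_returnsAlong_eq_one_of_tsum_eq_top hmeas hindep hident m <|
    tsum_apply_mul_eq_top_of_supermul (by simp [zeroAt])
      (measure_zeroAt_mul_le hmeas hindep hident)
      (tsum_measure_zeroAt_eq_top hmeas hindep hident hrec') hm
end

section
/- Let Y_n be a random walk on Z^k with i.i.d. steps satisfying the uniform bound P(Y_n = x) ≤ c/n^{3/2} for all x ∈ Z^k and n ≥ 1. Then for every ε > 0, the set of points x ∈ Z^k with P(∃ n, Y_n = x) > ε is finite. -/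
/-!
Fix a horizon `N` beyond which the tail `∑_{n ≥ N} sup_x P(Y_n = x)` is below `ε / 2`. A point hit
with probability more than `ε` must then collect at least `ε / 2` from the first `N` times, i.e.
`∑_{n < N} P(Y_n = x) ≥ ε / 2`. Summed over all `x` these quantities total at most `N`, so only
finitely many `x` qualify.
-/

open MeasureTheory ProbabilityTheory Filter
open scoped ENNReal

section

variable {Ω α : Type*} [MeasurableSpace Ω] [MeasurableSpace α] [MeasurableSingletonClass α]
  {μ : Measure Ω}

theorem tsum_measure_fiber_le_measure_univ {f : Ω → α} (hf : Measurable f) :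
    ∑' x, μ {ω | f ω = x} ≤ μ Set.univ :=
  tsum_measure_le_measure_univ (fun x => (hf (measurableSet_singleton x)).nullMeasurableSet)
    fun _ _ hxy => Disjoint.aedisjoint <|
      Set.disjoint_left.mpr fun _ h₁ h₂ => hxy (h₁.symm.trans h₂)

theorem tsum_sum_range_measure_fiber_ne_top [IsFiniteMeasure μ] {Y : ℕ → Ω → α}
    (hY : ∀ n, Measurable (Y n)) (N : ℕ) :
    ∑' x, ∑ n ∈ Finset.range N, μ {ω | Y n ω = x} ≠ ∞ := by
  rw [Summable.tsum_finsetSum fun _ _ => ENNReal.summable]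
  exact ENNReal.sum_ne_top.mpr fun n _ =>
    ne_top_of_le_ne_top (measure_ne_top μ _) (tsum_measure_fiber_le_measure_univ (hY n))

omit [MeasurableSpace α] [MeasurableSingletonClass α] in
theorem measure_exists_eq_le_sum_range_add_tsum (Y : ℕ → Ω → α) (x : α) (N : ℕ) :
    μ {ω | ∃ n, Y n ω = x} ≤
      ∑ n ∈ Finset.range N, μ {ω | Y n ω = x} + ∑' m, μ {ω | Y (m + N) ω = x} := by
  have hcover : {ω | ∃ n, Y n ω = x} ⊆
      (⋃ n ∈ Finset.range N, {ω | Y n ω = x}) ∪ ⋃ m, {ω | Y (m + N) ω = x} := by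
    rintro ω ⟨n, hn⟩
    rcases lt_or_ge n N with h | h
    · exact Or.inl (Set.mem_biUnion (Finset.mem_range.mpr h) hn)
    · exact Or.inr (Set.mem_iUnion.mpr ⟨n - N, by rwa [Nat.sub_add_cancel h]⟩)
  calc μ {ω | ∃ n, Y n ω = x}
      ≤ μ ((⋃ n ∈ Finset.range N, {ω | Y n ω = x}) ∪ ⋃ m, {ω | Y (m + N) ω = x}) :=
        measure_mono hcover
    _ ≤ μ (⋃ n ∈ Finset.range N, {ω | Y n ω = x}) + μ (⋃ m, {ω | Y (m + N) ω = x}) :=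
        measure_union_le _ _
    _ ≤ _ := add_le_add (measure_biUnion_finset_le _ _) (measure_iUnion_le _)

theorem finite_setOf_lt_measure_exists_eq [IsFiniteMeasure μ] {Y : ℕ → Ω → α}
    (hY : ∀ n, Measurable (Y n)) {b : ℕ → ℝ≥0∞} (hb : ∑' n, b n ≠ ∞)
    (hYb : ∀ᶠ n in atTop, ∀ x, μ {ω | Y n ω = x} ≤ b n) {ε : ℝ≥0∞} (hε : ε ≠ 0) :
    {x | ε < μ {ω | ∃ n, Y n ω = x}}.Finite := by
  have hε₂ : 0 < ε / 2 := ENNReal.half_pos hε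
  obtain ⟨N, hNb, hNtail⟩ := (eventually_forall_ge_atTop.mpr hYb).and
    ((ENNReal.tendsto_sum_nat_add b hb).eventually (gt_mem_nhds hε₂)) |>.exists
  refine (ENNReal.finite_const_le_of_tsum_ne_top
    (tsum_sum_range_measure_fiber_ne_top (μ := μ) hY N) hε₂.ne').subset
    fun x hx => show ε / 2 ≤ _ from le_of_not_gt fun hhead => ?_
  have htail : ∑' m, μ {ω | Y (m + N) ω = x} < ε / 2 :=
    (ENNReal.tsum_le_tsum fun m => hNb (m + N) (Nat.le_add_left N m) x).trans_lt hNtail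
  refine lt_irrefl ε ?_
  calc ε < μ {ω | ∃ n, Y n ω = x} := hx
    _ ≤ _ := measure_exists_eq_le_sum_range_add_tsum Y x N
    _ < ε / 2 + ε / 2 := ENNReal.add_lt_add hhead htail
    _ = ε := ENNReal.add_halves ε

end

theorem uniform_decay_implies_few_likely_points_general
    {k : ℕ}
    {Ω : Type*} [MeasurableSpace Ω] (μ : Measure Ω) [IsProbabilityMeasure μ]
    (X : ℕ → Ω → (Fin k → ℤ))
    (hmeas : ∀ i, Measurable (X i))
    (Y : ℕ → Ω → (Fin k → ℤ))
    (hY : ∀ n ω, Y n ω = ∑ i ∈ Finset.range n, X i ω)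
    (c : ℝ)
    (hbound : ∀ (x : Fin k → ℤ) (n : ℕ), 1 ≤ n →
      (μ {ω | Y n ω = x}).toReal ≤ c / (n : ℝ) ^ ((3 : ℝ) / 2)) :
    ∀ ε : ℝ, 0 < ε →
      {x : Fin k → ℤ | ε < (μ {ω | ∃ n, Y n ω = x}).toReal}.Finite := by
  intro ε hε
  have hYmeas : ∀ n, Measurable (Y n) := fun n => by
    rw [show Y n = fun ω => ∑ i ∈ Finset.range n, X i ω from funext (hY n)]
    exact Finset.measurable_sum _ fun i _ => hmeas i
  have hsummable : Summable fun n : ℕ => c / (n : ℝ) ^ ((3 : ℝ) / 2) := by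
    simpa only [div_eq_mul_inv] using (Real.summable_nat_rpow_inv.mpr (by norm_num)).mul_left c
  have hdecay : ∀ᶠ n in atTop, ∀ x,
      μ {ω | Y n ω = x} ≤ ENNReal.ofReal (c / (n : ℝ) ^ ((3 : ℝ) / 2)) :=
    eventually_atTop.mpr ⟨1, fun n hn x => by
      rw [← ENNReal.ofReal_toReal (measure_ne_top μ _)]
      exact ENNReal.ofReal_le_ofReal (hbound x n hn)⟩
  refine (finite_setOf_lt_measure_exists_eq hYmeas hsummable.tsum_ofReal_ne_top hdecay
    (ENNReal.ofReal_pos.mpr hε).ne').subset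
    fun _ hx => (ENNReal.ofReal_lt_iff_lt_toReal hε.le (measure_ne_top μ _)).mpr hx

/-- for a random walk on ℤ^k with i.i.d. steps satisfying the uniform bound
`P(Y_n = x) ≤ c/n^{3/2}`, for every `ε > 0` the set of points visited with probability
greater than `ε` is finite. -/
theorem uniform_decay_implies_few_likely_points
    {k : ℕ}
    {Ω : Type*} [MeasurableSpace Ω] (μ : Measure Ω) [IsProbabilityMeasure μ]
    (X : ℕ → Ω → (Fin k → ℤ))
    (hmeas : ∀ i, Measurable (X i))
    (hindep : iIndepFun X μ)
    (hident : ∀ i j, IdentDistrib (X i) (X j) μ μ)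
    (Y : ℕ → Ω → (Fin k → ℤ))
    (hY : ∀ n ω, Y n ω = ∑ i ∈ Finset.range n, X i ω)
    (c : ℝ) (hc : 0 < c)
    (hbound : ∀ (x : Fin k → ℤ) (n : ℕ), 1 ≤ n →
      (μ {ω | Y n ω = x}).toReal ≤ c / (n : ℝ) ^ ((3 : ℝ) / 2)) :
    ∀ ε : ℝ, 0 < ε →
      {x : Fin k → ℤ | ε < (μ {ω | ∃ n, Y n ω = x}).toReal}.Finite :=
  uniform_decay_implies_few_likely_points_general μ X hmeas Y hY c hbound
end
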